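/- arXiv:2309.08228 — 3 statements merged into one kernel-verified Lean document; each statement's English description precedes it below -/
import Mathlib

section
/- Let 1 ≤ m₁ ≤ m₂, let Ω ⊆ ℝ^{m₁} be a nonempty open convex set, let D ⊆ ℝ^{m₂} be nonempty, and let φ : ℝ^{m₂} → ℝ^{m₁} and ν : Ω → ℝ^{m₂} be differentiable maps with φ(D) ⊆ Ω and ν(φ(x)) = x for all x ∈ D. If the derivative of the composite φ∘ν equals the identity map of ℝ^{m₁} at every point of Ω, then φ(ν(y)) = y for all y ∈ Ω. -/
/-- If an autoencoder `(φ, ν)` has vanishing reconstruction loss on `D` and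
the derivative of `φ ∘ ν` equals the identity everywhere on the nonempty open convex
latent domain `Ω`, then `φ ∘ ν` is the identity on `Ω`. -/
theorem stmt_1 (m₁ m₂ : ℕ) (h1 : 1 ≤ m₁) (h12 : m₁ ≤ m₂)
    (Ω : Set (Fin m₁ → ℝ)) (hne : Ω.Nonempty) (hopen : IsOpen Ω) (hconv : Convex ℝ Ω)
    (D : Set (Fin m₂ → ℝ)) (hD : D.Nonempty)
    (φ : (Fin m₂ → ℝ) → (Fin m₁ → ℝ)) (ν : (Fin m₁ → ℝ) → (Fin m₂ → ℝ))
    (hφ : Differentiable ℝ φ) (hν : DifferentiableOn ℝ ν Ω)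
    (hmap : φ '' D ⊆ Ω) (hrec : ∀ x ∈ D, ν (φ x) = x)
    (hjac : ∀ y ∈ Ω, HasFDerivAt (φ ∘ ν) (ContinuousLinearMap.id ℝ (Fin m₁ → ℝ)) y) :
    ∀ y ∈ Ω, φ (ν y) = y := by
  obtain ⟨x₀, hx₀⟩ := hD
  have hy₀ : φ x₀ ∈ Ω := hmap ⟨x₀, hx₀, rfl⟩
  have hdiff : DifferentiableOn ℝ (φ ∘ ν) Ω := fun y hy =>
    ((hjac y hy).differentiableAt).differentiableWithinAt
  have hid : DifferentiableOn ℝ (id : (Fin m₁ → ℝ) → (Fin m₁ → ℝ)) Ω :=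
    differentiable_id.differentiableOn
  have key : Ω.EqOn (φ ∘ ν) id := by
    refine hconv.eqOn_of_fderivWithin_eq hdiff hid hopen.uniqueDiffOn (fun z hz => ?_) hy₀ ?_
    · rw [fderivWithin_of_isOpen hopen hz, fderivWithin_of_isOpen hopen hz,
        (hjac z hz).fderiv, fderiv_id]
    · simp [Function.comp, hrec x₀ hx₀]
  exact fun y hy => key hy
end

section
/- Let Ω = (-1,1)^m ⊆ ℝ^m (m ≥ 1) and let ρ_n : Ω → ℝ^m be continuously differentiable maps and ρ : Ω → ℝ^m a continuously differentiable map such that: (i) ρ_n → ρ uniformly on Ω and Dρ_n → Dρ uniformly on Ω (in operator norm); (ii) there are subsets P_n ⊆ Ω with sup_{p ∈ P_n} ‖Dρ_n(p) − id‖ → 0, and every point of Ω is the limit of a sequence of points p_n ∈ P_n; (iii) there are points y_n ∈ Ω with ρ_n(y_n) = y_n and y_n → y₀ ∈ Ω. Then ρ(y) = y for all y ∈ Ω. -/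
/-!
Both pieces of information about `ρ` are read off along sequences: if `Fₙ → f` uniformly on
`Ω` and `pₙ → x` in `Ω`, then `Fₙ pₙ → f x`. Applied to `Dρₙ` along grid points `pₙ → x`, whose
Jacobians tend to the identity, this gives `Dρ = id` on `Ω`; applied to `ρₙ` along the fixed
points `yₙ → y₀`, it gives `ρ y₀ = y₀`. Since the cube is connected, `ρ - id` is then constant,
hence zero.
-/

open Filter Topology

theorem TendstoUniformlyOn.apply_eq_of_tendsto_comp {ι X Y : Type*} [TopologicalSpace X]
    [UniformSpace Y] [T2Space Y] {l : Filter ι} [l.NeBot] {F : ι → X → Y} {f : X → Y}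
    {s : Set X} {x : X} {p : ι → X} {L : Y} (hF : TendstoUniformlyOn F f l s)
    (hf : ContinuousWithinAt f s x) (hps : ∀ i, p i ∈ s) (hpx : Tendsto p l (𝓝 x))
    (hFp : Tendsto (fun i => F i (p i)) l (𝓝 L)) :
    f x = L :=
  tendsto_nhds_unique
    (hF.tendsto_comp hf (tendsto_nhdsWithin_iff.mpr ⟨hpx, Eventually.of_forall hps⟩)) hFp

theorem tendsto_apply_of_forall_mem_norm_sub_lt {X E : Type*} [SeminormedAddCommGroup E]
    {g : ℕ → X → E} {L : E} {P : ℕ → Set X} {p : ℕ → X}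
    (hg : ∀ ε > 0, ∃ N : ℕ, ∀ n ≥ N, ∀ q ∈ P n, ‖g n q - L‖ < ε) (hp : ∀ n, p n ∈ P n) :
    Tendsto (fun n => g n (p n)) atTop (𝓝 L) := by
  refine Metric.tendsto_atTop.mpr fun ε hε => ?_
  obtain ⟨N, hN⟩ := hg ε hε
  exact ⟨N, fun n hn => by simpa only [dist_eq_norm] using hN n hn (p n) (hp n)⟩

theorem stmt_7_general (m : ℕ)
    (Ω : Set (Fin m → ℝ)) (hΩ : Ω = Set.pi Set.univ fun _ : Fin m => Set.Ioo (-1 : ℝ) 1)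
    (ρ : ℕ → (Fin m → ℝ) → (Fin m → ℝ)) (ρlim : (Fin m → ℝ) → (Fin m → ℝ))
    (hC1lim : ContDiffOn ℝ 1 ρlim Ω)
    (hunif : TendstoUniformlyOn ρ ρlim atTop Ω)
    (hdunif : TendstoUniformlyOn (fun n x => fderiv ℝ (ρ n) x)
      (fun x => fderiv ℝ ρlim x) atTop Ω)
    (P : ℕ → Set (Fin m → ℝ)) (hPΩ : ∀ n, P n ⊆ Ω)
    (hjac : ∀ ε > 0, ∃ N : ℕ, ∀ n ≥ N, ∀ p ∈ P n,
      ‖fderiv ℝ (ρ n) p - ContinuousLinearMap.id ℝ (Fin m → ℝ)‖ < ε)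
    (hdense : ∀ x ∈ Ω, ∃ p : ℕ → (Fin m → ℝ),
      (∀ n, p n ∈ P n) ∧ Tendsto p atTop (nhds x))
    (y : ℕ → (Fin m → ℝ)) (hy : ∀ n, y n ∈ Ω) (hfix : ∀ n, ρ n (y n) = y n)
    (y₀ : Fin m → ℝ) (hy₀ : y₀ ∈ Ω) (hylim : Tendsto y atTop (nhds y₀)) :
    ∀ z ∈ Ω, ρlim z = z := by
  have hopen : IsOpen Ω := hΩ ▸ isOpen_set_pi Set.finite_univ fun _ _ => isOpen_Ioo
  have hconv : Convex ℝ Ω := hΩ ▸ convex_pi fun _ _ => convex_Ioo _ _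
  have hderiv : ∀ x ∈ Ω, fderiv ℝ ρlim x = fderiv ℝ id x := fun x hx => by
    obtain ⟨p, hpP, hpx⟩ := hdense x hx
    rw [fderiv_id]
    exact hdunif.apply_eq_of_tendsto_comp (hC1lim.continuousOn_fderiv_of_isOpen hopen le_rfl x hx)
      (fun n => hPΩ n (hpP n)) hpx (tendsto_apply_of_forall_mem_norm_sub_lt hjac hpP)
  have hfix₀ : ρlim y₀ = y₀ :=
    hunif.apply_eq_of_tendsto_comp (hC1lim.continuousOn y₀ hy₀) hy hylim
      (by simpa only [hfix] using hylim)
  exact fun z hz => hopen.eqOn_of_fderiv_eq hconv.isPreconnected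
    (hC1lim.differentiableOn one_ne_zero) differentiableOn_id hderiv hy₀ hfix₀ hz

/-- Analytic core of the Main Theorem. If `ρ_n → ρ` and `Dρ_n → Dρ`
uniformly on the open cube `Ω = (-1,1)^m`, the Jacobians `Dρ_n` tend to the identity
uniformly on the sampling grids `P_n` (which fill `Ω` in the limit), and `ρ_n` has fixed
points `y_n → y₀ ∈ Ω`, then `ρ` is the identity on `Ω`. -/
theorem stmt_7 (m : ℕ) (hm : 1 ≤ m)
    (Ω : Set (Fin m → ℝ)) (hΩ : Ω = Set.pi Set.univ fun _ : Fin m => Set.Ioo (-1 : ℝ) 1)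
    (ρ : ℕ → (Fin m → ℝ) → (Fin m → ℝ)) (ρlim : (Fin m → ℝ) → (Fin m → ℝ))
    (hC1 : ∀ n, ContDiffOn ℝ 1 (ρ n) Ω) (hC1lim : ContDiffOn ℝ 1 ρlim Ω)
    (hunif : TendstoUniformlyOn ρ ρlim atTop Ω)
    (hdunif : TendstoUniformlyOn (fun n x => fderiv ℝ (ρ n) x)
      (fun x => fderiv ℝ ρlim x) atTop Ω)
    (P : ℕ → Set (Fin m → ℝ)) (hPΩ : ∀ n, P n ⊆ Ω)
    (hjac : ∀ ε > 0, ∃ N : ℕ, ∀ n ≥ N, ∀ p ∈ P n,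
      ‖fderiv ℝ (ρ n) p - ContinuousLinearMap.id ℝ (Fin m → ℝ)‖ < ε)
    (hdense : ∀ x ∈ Ω, ∃ p : ℕ → (Fin m → ℝ),
      (∀ n, p n ∈ P n) ∧ Tendsto p atTop (nhds x))
    (y : ℕ → (Fin m → ℝ)) (hy : ∀ n, y n ∈ Ω) (hfix : ∀ n, ρ n (y n) = y n)
    (y₀ : Fin m → ℝ) (hy₀ : y₀ ∈ Ω) (hylim : Tendsto y atTop (nhds y₀)) :
    ∀ z ∈ Ω, ρlim z = z :=
  stmt_7_general m Ω hΩ ρ ρlim hC1lim hunif hdunif P hPΩ hjac hdense y hy hfix y₀ hy₀ hylim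
end

section
/- Let n ≥ 0 and let P be a real polynomial of degree n+1 such that ∫_{-1}^{1} P(x) q(x) dx = 0 for every real polynomial q of degree at most n. Then P has n+1 distinct real roots, all lying in the open interval (-1, 1). -/
open intervalIntegral Polynomial Set

/-- A nonzero real polynomial all of whose roots in `Ioo (-1) 1` have even
multiplicity has constant sign on `Ioo (-1) 1`. -/
lemma stmt8_aux_sign (N : ℕ) : ∀ f : Polynomial ℝ, f.natDegree ≤ N → f ≠ 0 →
    (∀ x ∈ Set.Ioo (-1:ℝ) 1, Even (f.rootMultiplicity x)) →
    (∀ x ∈ Set.Ioo (-1:ℝ) 1, 0 ≤ f.eval x) ∨ (∀ x ∈ Set.Ioo (-1:ℝ) 1, f.eval x ≤ 0) := by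
  induction N with
  | zero =>
    intro f hdeg hf _
    rcases Polynomial.natDegree_eq_zero.mp (Nat.le_zero.mp hdeg) with ⟨c, rfl⟩
    rcases le_total 0 c with hc | hc
    · exact Or.inl fun x _ => by simpa using hc
    · exact Or.inr fun x _ => by simpa using hc
  | succ N ih =>
    intro f hdeg hf heven
    by_cases hroot : ∃ r ∈ Set.Ioo (-1:ℝ) 1, f.eval r = 0
    · obtain ⟨r, hrIoo, hr⟩ := hroot
      have hpos : 0 < f.rootMultiplicity r := (Polynomial.rootMultiplicity_pos hf).mpr hr
      have h2 : 2 ≤ f.rootMultiplicity r := by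
        rcases heven r hrIoo with ⟨k, hk⟩
        omega
      have hdvd : (Polynomial.X - Polynomial.C r) ^ 2 ∣ f :=
        dvd_trans (pow_dvd_pow _ h2) (Polynomial.pow_rootMultiplicity_dvd f r)
      obtain ⟨h, hfh⟩ := hdvd
      have hh : h ≠ 0 := by
        rintro rfl; simp at hfh; exact hf hfh
      have hsq : ((Polynomial.X - Polynomial.C r) ^ 2 : Polynomial ℝ) ≠ 0 := by
        apply pow_ne_zero; exact Polynomial.X_sub_C_ne_zero r
      have hnd : f.natDegree = 2 + h.natDegree := by
        rw [hfh, Polynomial.natDegree_mul hsq hh]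
        simp [Polynomial.natDegree_pow]
      have hhd : h.natDegree ≤ N := by omega
      have hheven : ∀ x ∈ Set.Ioo (-1:ℝ) 1, Even (h.rootMultiplicity x) := by
        intro x hx
        have hmul : f.rootMultiplicity x =
            Polynomial.rootMultiplicity x ((Polynomial.X - Polynomial.C r) ^ 2)
              + h.rootMultiplicity x := by
          rw [hfh] at hf ⊢
          exact Polynomial.rootMultiplicity_mul hf
        have he2 : Even (Polynomial.rootMultiplicity x ((Polynomial.X - Polynomial.C r) ^ 2)) := by
          by_cases hxr : x = r
          · subst hxr; rw [Polynomial.rootMultiplicity_X_sub_C_pow]; exact even_two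
          · rw [Polynomial.rootMultiplicity_eq_zero]
            · exact Even.zero
            · simp [Polynomial.IsRoot, sub_eq_zero, hxr]
        have := heven x hx
        rw [hmul, Nat.even_add] at this
        exact this.mp he2
      have hev : ∀ x, f.eval x = (x - r) ^ 2 * h.eval x := by
        intro x; rw [hfh]; simp
      rcases ih h hhd hh hheven with hs | hs
      · exact Or.inl fun x hx => by
          rw [hev]; exact mul_nonneg (sq_nonneg _) (hs x hx)
      · exact Or.inr fun x hx => by
          rw [hev]; exact mul_nonpos_of_nonneg_of_nonpos (sq_nonneg _) (hs x hx)
    · push_neg at hroot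
      by_contra hcon
      push_neg at hcon
      obtain ⟨⟨a, ha, hfa'⟩, ⟨b, hb, hfb'⟩⟩ := hcon
      have hsub : Set.uIcc a b ⊆ Set.Ioo (-1:ℝ) 1 :=
        (Set.ordConnected_Ioo).uIcc_subset ha hb
      have hmem : (0:ℝ) ∈ Set.uIcc (f.eval a) (f.eval b) :=
        Set.mem_uIcc.mpr (Or.inl ⟨hfa'.le, hfb'.le⟩)
      obtain ⟨c, hc, hc0⟩ := intermediate_value_uIcc
        (f.continuous_aeval.continuousOn (s := Set.uIcc a b)) hmem
      exact hroot c (hsub hc) hc0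

/-- A nonzero polynomial that is nonnegative on `Ioo (-1) 1` has nonzero integral. -/
lemma stmt8_aux_int (f : Polynomial ℝ) (hf : f ≠ 0)
    (hsign : ∀ x ∈ Set.Ioo (-1:ℝ) 1, 0 ≤ f.eval x)
    (hint : ∫ x in (-1:ℝ)..1, f.eval x = 0) : False := by
  rw [intervalIntegral.integral_of_le (by norm_num),
    MeasureTheory.integral_Ioc_eq_integral_Ioo] at hint
  have hcont : Continuous fun x => f.eval x := f.continuous_aeval
  have hInt : MeasureTheory.IntegrableOn (fun x => f.eval x) (Set.Ioo (-1:ℝ) 1) :=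
    (hcont.integrableOn_Icc (μ := MeasureTheory.volume)).mono_set Set.Ioo_subset_Icc_self
  have hnn : 0 ≤ᵐ[MeasureTheory.volume.restrict (Set.Ioo (-1:ℝ) 1)] fun x => f.eval x :=
    (MeasureTheory.ae_restrict_iff' measurableSet_Ioo).mpr
      (MeasureTheory.ae_of_all _ fun x hx => hsign x hx)
  have hz := (MeasureTheory.integral_eq_zero_iff_of_nonneg_ae hnn hInt).mp hint
  rw [Filter.EventuallyEq, MeasureTheory.ae_restrict_iff' measurableSet_Ioo] at hz
  have hz' : ∀ᵐ x : ℝ, x ∈ Set.Ioo (-1:ℝ) 1 → f.eval x = 0 := by simpa using hz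
  have hnull : MeasureTheory.volume {x : ℝ | ¬ (x ∈ Set.Ioo (-1:ℝ) 1 → f.eval x = 0)} = 0 := hz'
  have hroots : MeasureTheory.volume {x : ℝ | f.IsRoot x} = 0 :=
    (Polynomial.finite_setOf_isRoot hf).measure_zero _
  have hsubset : Set.Ioo (-1:ℝ) 1 ⊆
      {x : ℝ | ¬ (x ∈ Set.Ioo (-1:ℝ) 1 → f.eval x = 0)} ∪ {x : ℝ | f.IsRoot x} := by
    intro x hx
    by_cases h : f.eval x = 0
    · exact Or.inr h
    · exact Or.inl (by simp only [Set.mem_setOf_eq]; intro hh; exact h (hh hx))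
  have hle := (MeasureTheory.measure_mono hsubset).trans (MeasureTheory.measure_union_le (μ := MeasureTheory.volume) _ _)
  rw [hnull, hroots, Real.volume_Ioo] at hle
  norm_num at hle

/-- A real polynomial of degree `n+1` orthogonal on `(-1,1)` to all
polynomials of degree at most `n` has `n+1` distinct real roots, all in `(-1,1)`. -/
theorem stmt_8 (n : ℕ) (P : Polynomial ℝ) (hdeg : P.degree = (n + 1 : ℕ))
    (horth : ∀ q : Polynomial ℝ, q.degree ≤ (n : ℕ) →
      ∫ x in (-1:ℝ)..1, P.eval x * q.eval x = 0) :
    ∃ r : Fin (n + 1) → ℝ, Function.Injective r ∧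
      (∀ i, r i ∈ Set.Ioo (-1:ℝ) 1) ∧ ∀ i, P.eval (r i) = 0 := by
  classical
  have hP : P ≠ 0 := fun h => by
    rw [h, Polynomial.degree_zero] at hdeg
    exact WithBot.bot_ne_coe hdeg
  have hnd : P.natDegree = n + 1 := Polynomial.natDegree_eq_of_degree_eq_some hdeg
  -- S : roots of P in Ioo (-1,1) with odd multiplicity
  set S : Finset ℝ := P.roots.toFinset.filter
    (fun r => r ∈ Set.Ioo (-1:ℝ) 1 ∧ Odd (P.rootMultiplicity r)) with hS
  -- claim : S.card ≥ n + 1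
  have hcard_ge : n + 1 ≤ S.card := by
    by_contra hlt
    push_neg at hlt
    have hScard : S.card ≤ n := by omega
    set q : Polynomial ℝ := (S.val.map (fun a => Polynomial.X - Polynomial.C a)).prod with hq
    have hqmonic : q.Monic :=
      Polynomial.monic_multiset_prod_of_monic _ _ fun a _ => Polynomial.monic_X_sub_C a
    have hq0 : q ≠ 0 := hqmonic.ne_zero
    have hqroots : q.roots = S.val := Polynomial.roots_multiset_prod_X_sub_C S.val
    have hqdeg : q.natDegree = S.card := by
      rw [hq, Polynomial.natDegree_multiset_prod_X_sub_C_eq_card]; rfl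
    have hqdeg' : q.degree ≤ (n : ℕ) :=
      Polynomial.degree_le_of_natDegree_le (by omega)
    have hmultq : ∀ x : ℝ, q.rootMultiplicity x = if x ∈ S then 1 else 0 := by
      intro x
      rw [← Polynomial.count_roots, hqroots]
      by_cases hx : x ∈ S
      · rw [if_pos hx, Multiset.count_eq_one_of_mem S.nodup hx]
      · rw [if_neg hx, Multiset.count_eq_zero_of_notMem hx]
    set f : Polynomial ℝ := P * q with hf
    have hf0 : f ≠ 0 := mul_ne_zero hP hq0
    have hfeven : ∀ x ∈ Set.Ioo (-1:ℝ) 1, Even (f.rootMultiplicity x) := by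
      intro x hx
      rw [hf] at hf0 ⊢
      rw [Polynomial.rootMultiplicity_mul hf0, hmultq x]
      by_cases hodd : Odd (P.rootMultiplicity x)
      · have hroot : P.IsRoot x := by
          rw [← Polynomial.rootMultiplicity_pos hP]
          rcases hodd with ⟨k, hk⟩; omega
        have hxS : x ∈ S := by
          rw [hS, Finset.mem_filter, Multiset.mem_toFinset]
          exact ⟨(Polynomial.mem_roots hP).mpr hroot, hx, hodd⟩
        rw [if_pos hxS]
        rcases hodd with ⟨k, hk⟩
        exact ⟨k + 1, by omega⟩
      · have hxS : x ∉ S := by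
          rw [hS, Finset.mem_filter]
          rintro ⟨-, -, h⟩; exact hodd h
        rw [if_neg hxS]
        rw [← Nat.not_even_iff_odd, not_not] at hodd
        simpa using hodd
    have hIzero : ∫ x in (-1:ℝ)..1, f.eval x = 0 := by
      have := horth q hqdeg'
      simpa [hf] using this
    rcases stmt8_aux_sign f.natDegree f le_rfl hf0 hfeven with hs | hs
    · exact stmt8_aux_int f hf0 hs hIzero
    · refine stmt8_aux_int (-f) (neg_ne_zero.mpr hf0)
        (fun x hx => by simpa using hs x hx) ?_
      simp only [Polynomial.eval_neg]
      rw [intervalIntegral.integral_neg, hIzero, neg_zero]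
  -- upper bound on card
  have hcard_le : S.card ≤ n + 1 := by
    calc S.card ≤ P.roots.toFinset.card := Finset.card_filter_le _ _
      _ ≤ Multiset.card P.roots := Multiset.toFinset_card_le _
      _ ≤ P.natDegree := Polynomial.card_roots' P
      _ = n + 1 := hnd
  have hcard : S.card = n + 1 := le_antisymm hcard_le hcard_ge
  -- enumerate S
  let e := S.equivFin
  refine ⟨fun i => (e.symm (Fin.cast hcard.symm i) : ℝ), ?_, ?_, ?_⟩
  · intro i j hij
    have := e.symm.injective (Subtype.ext hij)
    exact Fin.cast_injective _ this
  · intro i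
    have hmem := Finset.mem_filter.mp (e.symm (Fin.cast hcard.symm i)).2
    exact hmem.2.1
  · intro i
    have hmem := Finset.mem_filter.mp (e.symm (Fin.cast hcard.symm i)).2
    have hodd := hmem.2.2
    have : 0 < P.rootMultiplicity ((e.symm (Fin.cast hcard.symm i)) : ℝ) := by
      rcases hodd with ⟨k, hk⟩; omega
    exact (Polynomial.rootMultiplicity_pos hP).mp this
end
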